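/- Let f, g ∈ ℝ[x,y] with Δ_g ⊆ Δ_f, and let E be an edge of Δ_f. If for infinitely many μ ∈ ℝ the polynomial f + μg is degenerated on E (i.e., the symbolic restriction (f+μg)|_E has a multiple factor not divisible by x or y), then there exists a nonconstant polynomial h ∈ ℝ[x,y], not divisible by x and not by y, such that h² divides both f|_E and g|_E. -/
import Mathlib


open MvPolynomial

/-- The Newton polygon of a bivariate polynomial: the convex hull of its support. -/
noncomputable def newtonPolygon (h : MvPolynomial (Fin 2) ℝ) : Set (ℝ × ℝ) :=
  convexHull ℝ ((fun m : Fin 2 →₀ ℕ => ((m 0 : ℝ), (m 1 : ℝ))) '' ↑h.support)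

open Classical in
/-- The symbolic restriction of `h` to a subset `E` of the plane: the sum of the
monomials of `h` whose exponent vector lies in `E`. -/
noncomputable def restrict (E : Set (ℝ × ℝ)) (h : MvPolynomial (Fin 2) ℝ) :
    MvPolynomial (Fin 2) ℝ :=
  ∑ m ∈ h.support.filter (fun m => ((m 0 : ℝ), (m 1 : ℝ)) ∈ E),
    monomial m (h.coeff m)

open Classical in
lemma coeff_restrict (E : Set (ℝ × ℝ)) (h : MvPolynomial (Fin 2) ℝ) (m : Fin 2 →₀ ℕ) :
    coeff m (restrict E h) = if ((m 0 : ℝ), (m 1 : ℝ)) ∈ E then coeff m h else 0 := by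
  classical
  rw [restrict, coeff_sum]
  simp only [coeff_monomial]
  rw [Finset.sum_ite_eq' _ m (fun m' => coeff m' h)]
  by_cases hmem : ((m 0 : ℝ), (m 1 : ℝ)) ∈ E <;>
    by_cases hc : coeff m h = 0 <;>
    simp [Finset.mem_filter, mem_support_iff, hmem, hc]

lemma restrict_linear (E : Set (ℝ × ℝ)) (f g : MvPolynomial (Fin 2) ℝ) (μ : ℝ) :
    restrict E (f + C μ * g) = restrict E f + C μ * restrict E g := by
  classical
  ext m
  simp only [coeff_restrict, coeff_add, coeff_C_mul]
  split_ifs <;> simp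


lemma add_single_apply (m : Fin 2 →₀ ℕ) (i j : Fin 2) :
    ((m + Finsupp.single i 1 : Fin 2 →₀ ℕ)) j = m j + if i = j then 1 else 0 := by
  simp [Finsupp.add_apply, Finsupp.single_apply]

lemma sub_single_apply (m : Fin 2 →₀ ℕ) (i j : Fin 2) :
    ((m - Finsupp.single i 1 : Fin 2 →₀ ℕ)) j = m j - if i = j then 1 else 0 := by
  simp [Finsupp.tsub_apply, Finsupp.single_apply]

lemma coeff_pderiv (i : Fin 2) (p : MvPolynomial (Fin 2) ℝ) (m : Fin 2 →₀ ℕ) :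
    coeff m (pderiv i p) =
      ((m i : ℝ) + 1) * coeff (m + Finsupp.single i 1) p := by
  classical
  conv_lhs => rw [p.as_sum]
  rw [map_sum, coeff_sum]
  simp only [pderiv_monomial, coeff_monomial]
  rw [Finset.sum_eq_single (m + Finsupp.single i 1)]
  · split_ifs with he
    · have h1 : ((m + Finsupp.single i 1 : Fin 2 →₀ ℕ)) i = m i + 1 := by
        rw [add_single_apply, if_pos rfl]
      rw [h1]
      push_cast
      ring
    · exfalso
      apply he
      ext j
      rw [sub_single_apply, add_single_apply]
      split_ifs <;> omega
  · intro s _ hne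
    split_ifs with he
    · by_cases hsi : s i = 0
      · simp [hsi]
      · exfalso
        apply hne
        ext j
        have hej := DFunLike.congr_fun he j
        rw [sub_single_apply] at hej
        rw [add_single_apply]
        have hii := DFunLike.congr_fun he i
        rw [sub_single_apply, if_pos rfl] at hii
        by_cases hj : i = j
        · subst hj; rw [if_pos rfl] at hej ⊢; omega
        · rw [if_neg hj] at hej ⊢; omega
    · rfl
  · intro h
    rw [notMem_support_iff] at h
    simp [h]

lemma support_pderiv_bound (i : Fin 2) (p : MvPolynomial (Fin 2) ℝ) (m : Fin 2 →₀ ℕ)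
    (hm : m ∈ (pderiv i p).support) : m i + 1 ≤ degreeOf i p := by
  have h1 := mem_support_iff.mp hm
  rw [coeff_pderiv] at h1
  have h2 : coeff (m + Finsupp.single i 1) p ≠ 0 := fun hc => h1 (by rw [hc, mul_zero])
  have h3 : ((m + Finsupp.single i 1 : Fin 2 →₀ ℕ)) i ≤ degreeOf i p := by
    rw [degreeOf_eq_sup]
    exact Finset.le_sup (f := fun m : Fin 2 →₀ ℕ => m i) (mem_support_iff.mpr h2)
  rwa [add_single_apply, if_pos rfl] at h3

lemma degreeOf_pderiv_lt (i : Fin 2) {p : MvPolynomial (Fin 2) ℝ}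
    (h : pderiv i p ≠ 0) : degreeOf i (pderiv i p) < degreeOf i p := by
  obtain ⟨m₀, hm₀⟩ : ∃ m, m ∈ (pderiv i p).support := by
    obtain ⟨d, hd⟩ := ne_zero_iff.mp h
    exact ⟨d, mem_support_iff.mpr hd⟩
  have hpos : 0 < degreeOf i p :=
    lt_of_lt_of_le (Nat.succ_pos _) (support_pderiv_bound i p m₀ hm₀)
  rw [degreeOf_lt_iff hpos]
  intro m hm
  exact Nat.lt_of_succ_le (support_pderiv_bound i p m hm)

lemma degreeOf_le_of_dvd {i : Fin 2} {p q : MvPolynomial (Fin 2) ℝ}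
    (h : p ∣ q) (hq : q ≠ 0) : degreeOf i p ≤ degreeOf i q := by
  have key : ∀ r : MvPolynomial (Fin 2) ℝ,
      degreeOf i r = degreeOf 0 (rename (Equiv.swap (0 : Fin 2) i) r) := by
    intro r
    have := degreeOf_rename_of_injective (p := r)
      (Equiv.swap (0 : Fin 2) i).injective (i := i)
    rw [Equiv.swap_apply_right] at this
    exact this.symm
  rw [key p, key q]
  set e := Equiv.swap (0 : Fin 2) i
  have hd : rename e p ∣ rename e q := map_dvd _ h
  have hq' : rename e q ≠ 0 := fun hc =>
    hq (rename_injective e e.injective (by rw [hc, map_zero]))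
  rw [← natDegree_finSuccEquiv, ← natDegree_finSuccEquiv]
  exact Polynomial.natDegree_le_of_dvd (map_dvd (finSuccEquiv ℝ 1) hd)
    ((map_ne_zero_iff _ (AlgEquiv.injective _)).mpr hq')

lemma pderiv_eq_zero_of_self_dvd {p : MvPolynomial (Fin 2) ℝ} (i : Fin 2)
    (h : p ∣ pderiv i p) : pderiv i p = 0 := by
  by_contra hne
  exact absurd (degreeOf_pderiv_lt i hne) (not_lt.mpr (degreeOf_le_of_dvd h hne))

lemma eq_C_of_pderivs (p : MvPolynomial (Fin 2) ℝ)
    (h0 : pderiv 0 p = 0) (h1 : pderiv 1 p = 0) : ∃ a : ℝ, p = C a := by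
  refine ⟨coeff 0 p, ?_⟩
  ext m
  rw [coeff_C]
  split_ifs with h
  · rw [← h]
  · have hm : m 0 ≠ 0 ∨ m 1 ≠ 0 := by
      by_contra hcon
      push_neg at hcon
      exact h (Finsupp.ext fun j => by fin_cases j <;> simp [hcon.1, hcon.2]).symm
    have key : ∀ i : Fin 2, pderiv i p = 0 → m i ≠ 0 → coeff m p = 0 := by
      intro i hpd hmi
      have hrep : m = (m - Finsupp.single i 1) + Finsupp.single i 1 := by
        ext j
        rw [add_single_apply, sub_single_apply]
        split_ifs with hj
        · subst hj; omega
        · omega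
      have hcp := coeff_pderiv i p (m - Finsupp.single i 1)
      rw [hpd, coeff_zero, ← hrep] at hcp
      have hne : (((((m - Finsupp.single i 1 : Fin 2 →₀ ℕ)) i : ℕ) : ℝ) + 1) ≠ 0 := by
        positivity
      exact (mul_eq_zero.mp hcp.symm).resolve_left hne
    rcases hm with hm | hm
    · exact key 0 h0 hm
    · exact key 1 h1 hm


lemma notMem_range_C {k : MvPolynomial (Fin 2) ℝ} (hu : ¬ IsUnit k) (h0 : k ≠ 0) :
    k ∉ Set.range (C : ℝ → MvPolynomial (Fin 2) ℝ) := by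
  rintro ⟨a, rfl⟩
  rcases eq_or_ne a 0 with rfl | ha
  · exact h0 (map_zero C)
  · exact hu ((isUnit_iff_ne_zero.mpr ha).map C)

lemma prime_sq_dvd_cases {p d M : MvPolynomial (Fin 2) ℝ} (hp : Prime p)
    (h : p ^ 2 ∣ d * M) (hnd : ¬ p ^ 2 ∣ d) : p ∣ M := by
  by_contra hM
  have h1 : p ∣ d * M := (dvd_pow_self p two_ne_zero).trans h
  rcases hp.dvd_mul.mp h1 with hd | hM'
  · obtain ⟨d₁, rfl⟩ := hd
    rw [pow_two, mul_assoc] at h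
    have h2 : p ∣ d₁ * M := (mul_dvd_mul_iff_left hp.ne_zero).mp h
    rcases hp.dvd_mul.mp h2 with h3 | h4
    · obtain ⟨e, rfl⟩ := h3
      exact hnd ⟨e, by ring⟩
    · exact hM h4
  · exact hM hM'

lemma dvd_wronskian (i : Fin 2) (F G p : MvPolynomial (Fin 2) ℝ) (μ : ℝ)
    (h : p ^ 2 ∣ F + C μ * G) :
    p ∣ F * pderiv i G - pderiv i F * G := by
  have hP : p ∣ F + C μ * G := (dvd_pow_self p two_ne_zero).trans h
  have hP' : p ∣ pderiv i (F + C μ * G) := by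
    obtain ⟨Q, hQ⟩ := h
    rw [hQ, pderiv_mul]
    apply dvd_add
    · apply dvd_mul_of_dvd_left
      rw [pderiv_pow]
      exact dvd_mul_of_dvd_left (Dvd.dvd.mul_left (dvd_pow_self p (by norm_num)) _) _
    · exact dvd_mul_of_dvd_left (dvd_pow_self p two_ne_zero) _
  have key : F * pderiv i G - pderiv i F * G =
      (F + C μ * G) * pderiv i G - G * pderiv i (F + C μ * G) := by
    rw [map_add, pderiv_C_mul]
    ring
  rw [key]
  exact dvd_sub (hP.mul_right _) (hP'.mul_left _)

lemma no_infinite_primes (S : Set ℝ) (hS : S.Infinite) (W F' G' : MvPolynomial (Fin 2) ℝ)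
    (hW : W ≠ 0)
    (hcop : ∀ p : MvPolynomial (Fin 2) ℝ, Prime p → p ∣ F' → p ∣ G' → False)
    (h : ∀ μ ∈ S, ∃ p : MvPolynomial (Fin 2) ℝ, Prime p ∧ p ∣ W ∧ p ∣ F' + C μ * G') :
    False := by
  classical
  have key : ∀ μ ∈ S, ∃ q, q ∈ (UniqueFactorizationMonoid.factors W).toFinset ∧
      q ∣ F' + C μ * G' := by
    intro μ hμ
    obtain ⟨p, hp, hpW, hpM⟩ := h μ hμ
    obtain ⟨q, hq, hassoc⟩ :=
      UniqueFactorizationMonoid.exists_mem_factors_of_dvd hW hp.irreducible hpW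
    exact ⟨q, Multiset.mem_toFinset.mpr hq, hassoc.symm.dvd.trans hpM⟩
  set φ : ℝ → MvPolynomial (Fin 2) ℝ :=
    fun μ => if hμ : μ ∈ S then (key μ hμ).choose else 1 with hφdef
  have hmaps : Set.MapsTo φ S
      (((UniqueFactorizationMonoid.factors W).toFinset : Finset (MvPolynomial (Fin 2) ℝ)) :
        Set (MvPolynomial (Fin 2) ℝ)) := by
    intro μ hμ
    simp only [hφdef, dif_pos hμ]
    exact (key μ hμ).choose_spec.1
  obtain ⟨μ, hμ, μ', hμ', hne, heq⟩ :=
    hS.exists_ne_map_eq_of_mapsTo hmaps (Finset.finite_toSet _)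
  have h1 : φ μ ∣ F' + C μ * G' := by
    simp only [hφdef, dif_pos hμ]
    exact (key μ hμ).choose_spec.2
  have h2 : φ μ ∣ F' + C μ' * G' := by
    rw [heq]
    simp only [hφdef, dif_pos hμ']
    exact (key μ' hμ').choose_spec.2
  have hq : Prime (φ μ) := by
    have hmem : φ μ ∈ (UniqueFactorizationMonoid.factors W).toFinset := by
      simp only [hφdef, dif_pos hμ]
      exact (key μ hμ).choose_spec.1
    exact UniqueFactorizationMonoid.prime_of_factor _ (Multiset.mem_toFinset.mp hmem)
  have hsub : φ μ ∣ C (μ - μ') * G' := by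
    have hid : C (μ - μ') * G' = (F' + C μ * G') - (F' + C μ' * G') := by
      rw [map_sub]
      ring
    rw [hid]
    exact dvd_sub h1 h2
  have hG' : φ μ ∣ G' := by
    have : G' = C (μ - μ')⁻¹ * (C (μ - μ') * G') := by
      rw [← mul_assoc, ← map_mul, inv_mul_cancel₀ (sub_ne_zero.mpr hne), map_one, one_mul]
    rw [this]
    exact hsub.mul_left _
  have hF' : φ μ ∣ F' := by
    have hid : F' = (F' + C μ * G') - C μ * G' := by ring
    rw [hid]
    exact dvd_sub h1 (hG'.mul_left _)
  exact hcop _ hq hF' hG'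


lemma wronskian_mul (i : Fin 2) (d F' G' : MvPolynomial (Fin 2) ℝ) :
    (d * F') * pderiv i (d * G') - pderiv i (d * F') * (d * G') =
      d * d * (F' * pderiv i G' - pderiv i F' * G') := by
  rw [pderiv_mul, pderiv_mul]
  ring

theorem common_square_factor_of_degenerate (f g : MvPolynomial (Fin 2) ℝ)
    (hΔ : newtonPolygon g ⊆ newtonPolygon f)
    (E : Set (ℝ × ℝ))
    -- `E` is an edge of the Newton polygon of `f`: a face in some nonzero direction
    -- which is not a single point
    (hedge : ∃ ξ : ℝ × ℝ, ξ ≠ 0 ∧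
      E = {α ∈ newtonPolygon f | ∀ α' ∈ newtonPolygon f,
            ξ.1 * α'.1 + ξ.2 * α'.2 ≤ ξ.1 * α.1 + ξ.2 * α.2} ∧
      ¬ E.Subsingleton)
    -- for infinitely many `μ` the polynomial `f + μ g` is degenerated on `E`
    (hdeg : {μ : ℝ | ∃ k : MvPolynomial (Fin 2) ℝ, ¬ IsUnit k ∧
        ¬ (X 0 ∣ k) ∧ ¬ (X 1 ∣ k) ∧ k ^ 2 ∣ restrict E (f + C μ * g)}.Infinite) :
    ∃ h : MvPolynomial (Fin 2) ℝ, h ∉ Set.range (C : ℝ → MvPolynomial (Fin 2) ℝ) ∧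
      ¬ (X 0 ∣ h) ∧ ¬ (X 1 ∣ h) ∧
      h ^ 2 ∣ restrict E f ∧ h ^ 2 ∣ restrict E g := by
  classical
  set F : MvPolynomial (Fin 2) ℝ := restrict E f with hFdef
  set G : MvPolynomial (Fin 2) ℝ := restrict E g with hGdef
  set S : Set ℝ := {μ : ℝ | ∃ k : MvPolynomial (Fin 2) ℝ, ¬ IsUnit k ∧
        ¬ (X 0 ∣ k) ∧ ¬ (X 1 ∣ k) ∧ k ^ 2 ∣ restrict E (f + C μ * g)} with hSdef
  have hS : ∀ μ ∈ S, ∃ k : MvPolynomial (Fin 2) ℝ, ¬ IsUnit k ∧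
      ¬ (X 0 ∣ k) ∧ ¬ (X 1 ∣ k) ∧ k ^ 2 ∣ F + C μ * G := by
    intro μ hμ
    obtain ⟨k, h1, h2, h3, h4⟩ := hμ
    rw [restrict_linear] at h4
    exact ⟨k, h1, h2, h3, h4⟩
  have hkne : ∀ k : MvPolynomial (Fin 2) ℝ, ¬ (X 0 ∣ k) → k ≠ 0 := by
    intro k hk hc
    exact hk (hc ▸ dvd_zero _)
  -- Case G = 0
  by_cases hG : G = 0
  · obtain ⟨μ, hμ⟩ := hdeg.nonempty
    obtain ⟨k, h1, h2, h3, h4⟩ := hS μ hμ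
    rw [hG, mul_zero, add_zero] at h4
    exact ⟨k, notMem_range_C h1 (hkne k h2), h2, h3, h4, by rw [hG]; exact dvd_zero _⟩
  -- Case F = 0
  by_cases hF : F = 0
  · obtain ⟨μ, hμS, hμ0⟩ := (hdeg.diff (Set.finite_singleton 0)).nonempty
    have hμ0' : μ ≠ 0 := fun hc => hμ0 (by simp [hc])
    obtain ⟨k, h1, h2, h3, h4⟩ := hS μ hμS
    rw [hF, zero_add] at h4
    have h5 : k ^ 2 ∣ G := by
      have hGid : G = C μ⁻¹ * (C μ * G) := by
        rw [← mul_assoc, ← map_mul, inv_mul_cancel₀ hμ0', map_one, one_mul]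
      rw [hGid]
      exact h4.mul_left _
    exact ⟨k, notMem_range_C h1 (hkne k h2), h2, h3, by rw [hF]; exact dvd_zero _, h5⟩
  -- main case
  letI : GCDMonoid (MvPolynomial (Fin 2) ℝ) :=
    UniqueFactorizationMonoid.toGCDMonoid (MvPolynomial (Fin 2) ℝ)
  obtain ⟨F', hF'⟩ := gcd_dvd_left F G
  obtain ⟨G', hG'⟩ := gcd_dvd_right F G
  set d : MvPolynomial (Fin 2) ℝ := gcd F G with hddef
  have hd0 : d ≠ 0 := fun hc => hF ((gcd_eq_zero_iff F G).mp hc).1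
  have hF'0 : F' ≠ 0 := fun hc => hF (by rw [hF', hc, mul_zero])
  have hG'0 : G' ≠ 0 := fun hc => hG (by rw [hG', hc, mul_zero])
  have hcop : ∀ p : MvPolynomial (Fin 2) ℝ, Prime p → p ∣ F' → p ∣ G' → False := by
    intro p hp h1 h2
    have hdF : d * p ∣ F := by
      rw [hF']
      exact mul_dvd_mul_left d h1
    have hdG : d * p ∣ G := by
      rw [hG']
      exact mul_dvd_mul_left d h2
    have hdp : d * p ∣ d * 1 := by
      rw [mul_one]
      exact dvd_gcd hdF hdG
    exact hp.not_unit (isUnit_of_dvd_one ((mul_dvd_mul_iff_left hd0).mp hdp))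
  by_cases hmain : ∃ p : MvPolynomial (Fin 2) ℝ,
      Prime p ∧ ¬ (X 0 ∣ p) ∧ ¬ (X 1 ∣ p) ∧ p ^ 2 ∣ d
  · obtain ⟨p, hp, h0, h1, hdvd⟩ := hmain
    exact ⟨p, notMem_range_C hp.not_unit hp.ne_zero, h0, h1,
      hdvd.trans ⟨F', hF'⟩, hdvd.trans ⟨G', hG'⟩⟩
  · have hstep : ∀ μ ∈ S, ∃ p : MvPolynomial (Fin 2) ℝ,
        Prime p ∧ p ^ 2 ∣ F + C μ * G ∧ p ∣ F' + C μ * G' := by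
      intro μ hμ
      obtain ⟨k, hku, hk0, hk1, hkd⟩ := hS μ hμ
      obtain ⟨p, hpi, hpk⟩ := WfDvdMonoid.exists_irreducible_factor hku (hkne k hk0)
      have hp : Prime p := UniqueFactorizationMonoid.irreducible_iff_prime.mp hpi
      have hp2 : p ^ 2 ∣ F + C μ * G := (pow_dvd_pow_of_dvd hpk 2).trans hkd
      have hpX0 : ¬ X 0 ∣ p := fun hc => hk0 (hc.trans hpk)
      have hpX1 : ¬ X 1 ∣ p := fun hc => hk1 (hc.trans hpk)
      have hnd : ¬ p ^ 2 ∣ d := fun hc => hmain ⟨p, hp, hpX0, hpX1, hc⟩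
      have heqd : F + C μ * G = d * (F' + C μ * G') := by
        rw [hF', hG']
        ring
      exact ⟨p, hp, hp2, prime_sq_dvd_cases hp (heqd ▸ hp2) hnd⟩
    have hWvan : ∀ i : Fin 2, F * pderiv i G - pderiv i F * G = 0 := by
      intro i
      by_contra hWne
      refine no_infinite_primes S hdeg _ F' G' hWne hcop (fun μ hμ => ?_)
      obtain ⟨p, hp, h2, hM⟩ := hstep μ hμ
      exact ⟨p, hp, dvd_wronskian i F G p μ h2, hM⟩
    have hred : ∀ i : Fin 2, F * pderiv i G - pderiv i F * G =
        d * d * (F' * pderiv i G' - pderiv i F' * G') := by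
      intro i
      rw [hF', hG']
      exact wronskian_mul i d F' G'
    have hW' : ∀ i : Fin 2, F' * pderiv i G' = pderiv i F' * G' := by
      intro i
      have h := hWvan i
      rw [hred i] at h
      rcases mul_eq_zero.mp h with h1 | h2
      · exact absurd (mul_self_eq_zero.mp h1) hd0
      · exact sub_eq_zero.mp h2
    have hFder : ∀ i : Fin 2, pderiv i F' = 0 := by
      intro i
      apply pderiv_eq_zero_of_self_dvd i
      have hdvd : F' ∣ G' * pderiv i F' := ⟨pderiv i G', by linear_combination -(hW' i)⟩
      exact UniqueFactorizationMonoid.dvd_of_dvd_mul_right_of_no_prime_factors hF'0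
        (fun hd1 hd2 hpr => hcop _ hpr hd1 hd2) hdvd
    have hGder : ∀ i : Fin 2, pderiv i G' = 0 := by
      intro i
      have h := hW' i
      rw [hFder i, zero_mul] at h
      rcases mul_eq_zero.mp h with h1 | h2
      · exact absurd h1 hF'0
      · exact h2
    obtain ⟨a, ha⟩ := eq_C_of_pderivs F' (hFder 0) (hFder 1)
    obtain ⟨b, hb⟩ := eq_C_of_pderivs G' (hGder 0) (hGder 1)
    have ha0 : a ≠ 0 := fun hc => hF'0 (by rw [ha, hc, map_zero])
    have hb0 : b ≠ 0 := fun hc => hG'0 (by rw [hb, hc, map_zero])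
    obtain ⟨μ, hμS, hμn⟩ := (hdeg.diff (Set.finite_singleton (-(a / b)))).nonempty
    have hab : a + μ * b ≠ 0 := by
      intro hc
      apply hμn
      have : μ = -(a / b) := by
        field_simp
        linarith
      simp [this]
    obtain ⟨k, hku, hk0, hk1, hkd⟩ := hS μ hμS
    have heqd : F + C μ * G = C (a + μ * b) * d := by
      rw [hF', hG', ha, hb, map_add, map_mul]
      ring
    have hkd' : k ^ 2 ∣ d := by
      rw [heqd] at hkd
      have hid : d = C (a + μ * b)⁻¹ * (C (a + μ * b) * d) := by
        rw [← mul_assoc, ← map_mul, inv_mul_cancel₀ hab, map_one, one_mul]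
      rw [hid]
      exact hkd.mul_left _
    exact ⟨k, notMem_range_C hku (hkne k hk0), hk0, hk1,
      hkd'.trans ⟨F', hF'⟩, hkd'.trans ⟨G', hG'⟩⟩
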